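/- arXiv:math-ph/0002033 — 4 statements merged into one kernel-verified Lean document; each statement's English description precedes it below -/
import Mathlib

section
/- Suppose λ > λ^{(1)} and κ > 0. Then for every δ > 0 there exists u ∈ C¹(closure(Ω);ℂ), not identically zero, with ∫_Ω (|u|² + |∇u|²) dx < δ and G_{λ,κ}(u, A_e) < 0. In particular, since G_{λ,κ}(0,A_e) = 0, the normal state (0,A_e) is not a local minimum of G_{λ,κ}. -/
open MeasureTheory Complex Set

noncomputable section

abbrev Pt : Type := ℝ × ℝ

/-- First partial derivative `∂₁ f` of a function on `ℝ²`. -/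
def pd1 {E : Type*} [NormedAddCommGroup E] [NormedSpace ℝ E] (f : Pt → E) (x : Pt) : E :=
  fderiv ℝ f x (1, 0)

/-- Second partial derivative `∂₂ f` of a function on `ℝ²`. -/
def pd2 {E : Type*} [NormedAddCommGroup E] [NormedSpace ℝ E] (f : Pt → E) (x : Pt) : E :=
  fderiv ℝ f x (0, 1)

/-- `rot A = ∂₁ A₂ - ∂₂ A₁`. -/
def rot2 (A : Pt → Pt) (x : Pt) : ℝ :=
  pd1 (fun y => (A y).2) x - pd2 (fun y => (A y).1) x

/-- `div A = ∂₁ A₁ + ∂₂ A₂`. -/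
def div2 (A : Pt → Pt) (x : Pt) : ℝ :=
  pd1 (fun y => (A y).1) x + pd2 (fun y => (A y).2) x

/-- Squared Euclidean norm of the magnetic gradient `∇u - iAu`. -/
def mgradSq (A : Pt → Pt) (u : Pt → ℂ) (x : Pt) : ℝ :=
  ‖pd1 u x - Complex.I * ((A x).1 : ℂ) * u x‖ ^ 2 +
    ‖pd2 u x - Complex.I * ((A x).2 : ℂ) * u x‖ ^ 2

/-- `Ω` has `C^∞` boundary: near each boundary point, `Ω` is the sublevel set of a smooth
function with nonvanishing gradient. -/
def SmoothBoundary (Ω : Set Pt) : Prop :=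
  ∀ x ∈ frontier Ω, ∃ f : Pt → ℝ, ContDiffAt ℝ (⊤ : ℕ∞) f x ∧ fderiv ℝ f x ≠ 0 ∧
    ∀ᶠ y in nhds x, (y ∈ Ω ↔ f y < 0)

/-- The Ginzburg-Landau functional `G_{λ,κ}`. -/
def GLfun (Ω : Set Pt) (He : Pt → ℝ) (lam k : ℝ) (u : Pt → ℂ) (A : Pt → Pt) : ℝ :=
  (∫ x in Ω, (lam * (-‖u x‖ ^ 2 + (1 / 2) * ‖u x‖ ^ 4) + mgradSq A u x)) +
    (k ^ 2 / lam) * ∫ x, (rot2 A x - He x) ^ 2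

/-- An admissible pair `(u, A)`: `u ∈ C¹(closure Ω; ℂ)` and `A = A_e + a` with
`a ∈ C¹(ℝ²;ℝ²)` and `rot a ∈ L²(ℝ²)`. -/
def Admissible (Ω : Set Pt) (Ae : Pt → Pt) (u : Pt → ℂ) (A : Pt → Pt) : Prop :=
  ContDiffOn ℝ 1 u (closure Ω) ∧
    ∃ a : Pt → Pt, ContDiff ℝ 1 a ∧ (∀ x, A x = Ae x + a x) ∧
      MemLp (fun x => rot2 a x) 2 volume

/-- The bottom of the spectrum of the Neumann magnetic Laplacian `-(∇ - iA_e)²` on `Ω`,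
as the infimum of Rayleigh quotients. -/
def lambdaOne (Ω : Set Pt) (Ae : Pt → Pt) : ℝ :=
  sInf {r : ℝ | ∃ u : Pt → ℂ, ContDiffOn ℝ 1 u (closure Ω) ∧
    (¬ ∀ x ∈ closure Ω, u x = 0) ∧
    r = (∫ x in Ω, mgradSq Ae u x) / (∫ x in Ω, ‖u x‖ ^ 2)}

lemma aux_fderiv_locbound {u : Pt → ℂ} {s : Set Pt} {x : Pt}
    (h : ContDiffWithinAt ℝ 1 u s x) (hx : x ∈ s) :
    ∃ w, IsOpen w ∧ x ∈ w ∧ ∃ C : ℝ, ∀ y ∈ s ∩ w, s ∈ nhds y → ‖fderiv ℝ u y‖ ≤ C := by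
  have h' : ContDiffWithinAt ℝ (1 : ℕ) u s x := by exact_mod_cast h
  obtain ⟨t, ht, p, hp⟩ := contDiffWithinAt_nat.mp h'
  rw [insert_eq_of_mem hx] at ht
  have hxt : x ∈ t := mem_of_mem_nhdsWithin hx ht
  have hc : ContinuousWithinAt (fun y => ‖p y 1‖) t x :=
    ((hp.cont 1 (by norm_cast)).norm) x hxt
  have h2 : ∀ᶠ y in nhdsWithin x t, ‖p y 1‖ < ‖p x 1‖ + 1 :=
    hc.eventually_lt_const (lt_add_one _)
  rw [eventually_nhdsWithin_iff] at h2
  obtain ⟨v, hv, hvo, hxv⟩ := eventually_nhds_iff.mp h2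
  obtain ⟨w1, hw1o, hxw1, hw1sub⟩ := mem_nhdsWithin.mp ht
  refine ⟨w1 ∩ v, hw1o.inter hvo, ⟨hxw1, hxv⟩, ‖p x 1‖ + 1, ?_⟩
  rintro y ⟨hys, hyw1, hyv⟩ hsy
  have hyt : y ∈ t := hw1sub ⟨hyw1, hys⟩
  have htn : t ∈ nhds y :=
    Filter.mem_of_superset (Filter.inter_mem (hw1o.mem_nhds hyw1) hsy) hw1sub
  have hd := (hp.hasFDerivWithinAt (by simp) hyt).hasFDerivAt htn
  rw [hd.fderiv]
  calc ‖(continuousMultilinearCurryFin1 ℝ Pt ℂ) (p y 1)‖ = ‖p y 1‖ :=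
        LinearIsometryEquiv.norm_map _ _
    _ ≤ ‖p x 1‖ + 1 := (hv y hyv hyt).le

lemma mgrad_contOn {Ω : Set Pt} (hΩo : IsOpen Ω) {Ae : Pt → Pt} (hAe : Continuous Ae)
    {u : Pt → ℂ} (hu : ContDiffOn ℝ 1 u (closure Ω)) :
    ContinuousOn (mgradSq Ae u) Ω := by
  have h1 : ContinuousOn (fun y => fderiv ℝ u y) Ω :=
    (hu.mono subset_closure).continuousOn_fderiv_of_isOpen hΩo le_rfl
  have hC : ContinuousOn u Ω := hu.continuousOn.mono subset_closure
  have hp1c : ContinuousOn (fun y => pd1 u y) Ω := h1.clm_apply continuousOn_const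
  have hp2c : ContinuousOn (fun y => pd2 u y) Ω := h1.clm_apply continuousOn_const
  have hA1 : ContinuousOn (fun y => (((Ae y).1 : ℝ) : ℂ)) Ω :=
    Complex.continuous_ofReal.comp_continuousOn ((continuous_fst.comp hAe).continuousOn)
  have hA2 : ContinuousOn (fun y => (((Ae y).2 : ℝ) : ℂ)) Ω :=
    Complex.continuous_ofReal.comp_continuousOn ((continuous_snd.comp hAe).continuousOn)
  exact ((hp1c.sub ((continuousOn_const.mul hA1).mul hC)).norm.pow 2).add
    ((hp2c.sub ((continuousOn_const.mul hA2).mul hC)).norm.pow 2)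

lemma mgrad_integrableOn {Ω : Set Pt} (hΩo : IsOpen Ω) (hΩb : Bornology.IsBounded Ω)
    {Ae : Pt → Pt} (hAe : Continuous Ae) {u : Pt → ℂ} (hu : ContDiffOn ℝ 1 u (closure Ω)) :
    IntegrableOn (mgradSq Ae u) Ω := by
  have hK : IsCompact (closure Ω) :=
    Metric.isCompact_of_isClosed_isBounded isClosed_closure hΩb.closure
  obtain ⟨Cu, hCu⟩ := hK.exists_bound_of_continuousOn hu.continuousOn
  obtain ⟨CA, hCA⟩ := hK.exists_bound_of_continuousOn (hAe.continuousOn (s := closure Ω))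
  set g := Ω.indicator (mgradSq Ae u) with hg
  have hmC : ContinuousOn (mgradSq Ae u) Ω := mgrad_contOn hΩo hAe hu
  have hgA : AEStronglyMeasurable g volume := by
    rw [aestronglyMeasurable_indicator_iff hΩo.measurableSet]
    exact hmC.aestronglyMeasurable hΩo.measurableSet
  have hloc : LocallyIntegrableOn g (closure Ω) volume := by
    intro x hx
    obtain ⟨w, hwo, hxw, C, hC'⟩ := aux_fderiv_locbound (hu x hx) hx
    refine ⟨closure Ω ∩ w, Filter.inter_mem self_mem_nhdsWithin
      (mem_nhdsWithin_of_mem_nhds (hwo.mem_nhds hxw)), ?_⟩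
    have hmeas : MeasurableSet (closure Ω ∩ w) :=
      isClosed_closure.measurableSet.inter hwo.measurableSet
    refine Measure.integrableOn_of_bounded (M := 2 * (C + CA * Cu) ^ 2)
      ((measure_mono inter_subset_left).trans_lt hK.measure_lt_top).ne hgA ?_
    rw [ae_restrict_iff' hmeas]
    filter_upwards with y hy
    by_cases hyO : y ∈ Ω
    · have hb : ‖fderiv ℝ u y‖ ≤ C :=
        hC' y ⟨hy.1, hy.2⟩ (Filter.mem_of_superset (hΩo.mem_nhds hyO) subset_closure)
      have hun : ‖u y‖ ≤ Cu := hCu y hy.1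
      have hA1n : ‖((((Ae y).1 : ℝ)) : ℂ)‖ ≤ CA := by
        rw [Complex.norm_real]; exact le_trans (norm_fst_le (Ae y)) (hCA y hy.1)
      have hA2n : ‖((((Ae y).2 : ℝ)) : ℂ)‖ ≤ CA := by
        rw [Complex.norm_real]; exact le_trans (norm_snd_le (Ae y)) (hCA y hy.1)
      have hCA0 : (0:ℝ) ≤ CA := le_trans (norm_nonneg _) hA1n
      have hp1b : ‖pd1 u y‖ ≤ C := by
        calc ‖pd1 u y‖ ≤ ‖fderiv ℝ u y‖ * ‖((1,0) : Pt)‖ :=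
              ContinuousLinearMap.le_opNorm _ _
          _ = ‖fderiv ℝ u y‖ := by
              rw [show ‖((1,0) : Pt)‖ = 1 by simp [Prod.norm_def], mul_one]
          _ ≤ C := hb
      have hp2b : ‖pd2 u y‖ ≤ C := by
        calc ‖pd2 u y‖ ≤ ‖fderiv ℝ u y‖ * ‖((0,1) : Pt)‖ :=
              ContinuousLinearMap.le_opNorm _ _
          _ = ‖fderiv ℝ u y‖ := by
              rw [show ‖((0,1) : Pt)‖ = 1 by simp [Prod.norm_def], mul_one]
          _ ≤ C := hb
      have hm1 : ‖Complex.I * (((Ae y).1 : ℝ) : ℂ) * u y‖ ≤ CA * Cu := by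
        rw [norm_mul, norm_mul, Complex.norm_I, one_mul]
        exact mul_le_mul hA1n hun (norm_nonneg _) hCA0
      have hm2 : ‖Complex.I * (((Ae y).2 : ℝ) : ℂ) * u y‖ ≤ CA * Cu := by
        rw [norm_mul, norm_mul, Complex.norm_I, one_mul]
        exact mul_le_mul hA2n hun (norm_nonneg _) hCA0
      have ht1 : ‖pd1 u y - Complex.I * (((Ae y).1 : ℝ) : ℂ) * u y‖ ≤ C + CA * Cu :=
        le_trans (norm_sub_le _ _) (add_le_add hp1b hm1)
      have ht2 : ‖pd2 u y - Complex.I * (((Ae y).2 : ℝ) : ℂ) * u y‖ ≤ C + CA * Cu :=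
        le_trans (norm_sub_le _ _) (add_le_add hp2b hm2)
      have hsq1 := pow_le_pow_left₀ (norm_nonneg _) ht1 2
      have hsq2 := pow_le_pow_left₀ (norm_nonneg _) ht2 2
      have hgy : g y = mgradSq Ae u y := indicator_of_mem hyO _
      have hg0 : (0:ℝ) ≤ g y := by
        rw [hgy]; unfold mgradSq; positivity
      rw [Real.norm_of_nonneg hg0, hgy]
      unfold mgradSq
      linarith
    · have : g y = 0 := indicator_of_notMem hyO _
      rw [this, norm_zero]
      positivity
  have hgi : IntegrableOn g (closure Ω) volume := hloc.integrableOn_isCompact hK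
  exact (hgi.mono_set subset_closure).congr_fun
    (fun y hy => (indicator_of_mem hy _)) hΩo.measurableSet

lemma scaled_mgrad {u : Pt → ℂ} {Ae : Pt → Pt} {x : Pt} (hdx : DifferentiableAt ℝ u x)
    {ε : ℝ} (hε : 0 ≤ ε) :
    mgradSq Ae (fun y => (ε:ℂ) • u y) x = ε ^ 2 * mgradSq Ae u x := by
  have hp1 : pd1 (fun y => (ε:ℂ) • u y) x = (ε:ℂ) • pd1 u x := by
    unfold pd1; rw [fderiv_fun_const_smul hdx]; rfl
  have hp2 : pd2 (fun y => (ε:ℂ) • u y) x = (ε:ℂ) • pd2 u x := by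
    unfold pd2; rw [fderiv_fun_const_smul hdx]; rfl
  unfold mgradSq
  rw [hp1, hp2]
  have e1 : (ε:ℂ) • pd1 u x - Complex.I * ((Ae x).1 : ℂ) * ((ε:ℂ) • u x)
      = (ε:ℂ) * (pd1 u x - Complex.I * ((Ae x).1 : ℂ) * u x) := by
    simp only [smul_eq_mul]; ring
  have e2 : (ε:ℂ) • pd2 u x - Complex.I * ((Ae x).2 : ℂ) * ((ε:ℂ) • u x)
      = (ε:ℂ) * (pd2 u x - Complex.I * ((Ae x).2 : ℂ) * u x) := by
    simp only [smul_eq_mul]; ring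
  rw [e1, e2, norm_mul, norm_mul, Complex.norm_real, Real.norm_of_nonneg hε]
  ring

/-- If `λ > λ^{(1)}`, then `G_{λ,κ}(0,A_e) = 0` and for every `δ > 0` there is a not
identically zero `u ∈ C¹(closure Ω)` with `H¹`-norm smaller than `δ` and
`G_{λ,κ}(u, A_e) < 0`; hence the normal state is not a local minimum. -/
theorem statement6
    (Ω : Set Pt) (hΩo : IsOpen Ω) (hΩc : IsConnected Ω) (hΩb : Bornology.IsBounded Ω)
    (hΩs : SmoothBoundary Ω)
    (He : Pt → ℝ) (hHe : ContDiff ℝ (⊤ : ℕ∞) He) (hHes : HasCompactSupport He)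
    (Ae : Pt → Pt) (hAe : ContDiff ℝ (⊤ : ℕ∞) Ae)
    (hAerot : ∀ x, rot2 Ae x = He x) (hAediv : ∀ x, div2 Ae x = 0)
    (lam k : ℝ) (hlam : lambdaOne Ω Ae < lam) (hk : 0 < k) :
    GLfun Ω He lam k (fun _ => 0) Ae = 0 ∧
      ∀ δ > (0:ℝ), ∃ u : Pt → ℂ, ContDiffOn ℝ 1 u (closure Ω) ∧
        (¬ ∀ x ∈ closure Ω, u x = 0) ∧
        (∫ x in Ω, (‖u x‖ ^ 2 + ‖pd1 u x‖ ^ 2 + ‖pd2 u x‖ ^ 2)) < δ ∧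
        GLfun Ω He lam k u Ae < 0 := by
  constructor
  · simp [GLfun, mgradSq, pd1, pd2, hAerot]
  · intro δ hδ
    obtain ⟨x0, hx0⟩ := hΩc.nonempty
    have hne : {r : ℝ | ∃ u : Pt → ℂ, ContDiffOn ℝ 1 u (closure Ω) ∧
        (¬ ∀ x ∈ closure Ω, u x = 0) ∧
        r = (∫ x in Ω, mgradSq Ae u x) / (∫ x in Ω, ‖u x‖ ^ 2)}.Nonempty :=
      ⟨_, ⟨fun _ => (1:ℂ), contDiffOn_const,
        fun h => one_ne_zero (h x0 (subset_closure hx0)), rfl⟩⟩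
    unfold lambdaOne at hlam
    obtain ⟨r, hrmem, hrlt⟩ := exists_lt_of_csInf_lt hne hlam
    obtain ⟨u, hu, hune, hreq⟩ := hrmem
    have hK : IsCompact (closure Ω) :=
      Metric.isCompact_of_isClosed_isBounded isClosed_closure hΩb.closure
    have hSint : IntegrableOn (fun x => ‖u x‖ ^ 2) Ω volume :=
      (ContinuousOn.integrableOn_compact hK (hu.continuousOn.norm.pow 2)).mono_set
        subset_closure
    have hQint : IntegrableOn (fun x => ‖u x‖ ^ 4) Ω volume :=
      (ContinuousOn.integrableOn_compact hK (hu.continuousOn.norm.pow 4)).mono_set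
        subset_closure
    have hMint : IntegrableOn (mgradSq Ae u) Ω volume :=
      mgrad_integrableOn hΩo hΩb hAe.continuous hu
    push_neg at hune
    obtain ⟨y₀, hy₀c, hy₀⟩ := hune
    have hev : ∀ᶠ y in nhdsWithin y₀ (closure Ω), u y ≠ 0 :=
      (hu.continuousOn y₀ hy₀c) (compl_singleton_mem_nhds hy₀)
    have hnb : (nhdsWithin y₀ Ω).NeBot := mem_closure_iff_nhdsWithin_neBot.mp hy₀c
    have hev' : ∀ᶠ y in nhdsWithin y₀ Ω, u y ≠ 0 :=
      nhdsWithin_mono y₀ subset_closure hev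
    obtain ⟨x₁, hx₁ne, hx₁Ω⟩ := (hev'.and self_mem_nhdsWithin).exists
    have hx₁c : x₁ ∈ closure Ω := subset_closure hx₁Ω
    have hS : 0 < ∫ x in Ω, ‖u x‖ ^ 2 := by
      rw [setIntegral_pos_iff_support_of_nonneg_ae
        (ae_of_all _ fun x => by positivity) hSint]
      have hct : ContinuousAt u x₁ := (hu.continuousOn x₁ hx₁c).continuousAt
        (Filter.mem_of_superset (hΩo.mem_nhds hx₁Ω) subset_closure)
      have hev2 : ∀ᶠ y in nhds x₁, u y ≠ 0 := hct (compl_singleton_mem_nhds hx₁ne)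
      obtain ⟨rad, hrad, hball⟩ :=
        Metric.mem_nhds_iff.mp (Filter.inter_mem hev2 (hΩo.mem_nhds hx₁Ω))
      refine lt_of_lt_of_le (Metric.measure_ball_pos volume x₁ hrad) (measure_mono ?_)
      intro y hy
      obtain ⟨h1, h2⟩ := hball hy
      refine ⟨?_, h2⟩
      simp only [Function.mem_support]
      exact pow_ne_zero 2 (norm_ne_zero_iff.mpr h1)
    have hM0 : 0 ≤ ∫ x in Ω, mgradSq Ae u x :=
      setIntegral_nonneg hΩo.measurableSet fun x _ => by unfold mgradSq; positivity
    have hQ0 : 0 ≤ ∫ x in Ω, ‖u x‖ ^ 4 :=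
      setIntegral_nonneg hΩo.measurableSet fun x _ => by positivity
    have hlam0 : 0 < lam :=
      lt_of_le_of_lt (div_nonneg hM0 hS.le) (hreq ▸ hrlt)
    have hMlt : (∫ x in Ω, mgradSq Ae u x) < lam * ∫ x in Ω, ‖u x‖ ^ 2 := by
      rw [hreq] at hrlt
      exact (div_lt_iff₀ hS).mp hrlt
    set S : ℝ := ∫ x in Ω, ‖u x‖ ^ 2 with hSdef
    set M : ℝ := ∫ x in Ω, mgradSq Ae u x with hMdef
    set Q : ℝ := ∫ x in Ω, ‖u x‖ ^ 4 with hQdef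
    set IH : ℝ := ∫ x in Ω, (‖u x‖ ^ 2 + ‖pd1 u x‖ ^ 2 + ‖pd2 u x‖ ^ 2) with hIHdef
    set D : ℝ := lam / 2 * Q with hDdef
    have hD0 : 0 ≤ D := mul_nonneg (by linarith) hQ0
    have hc : 0 < lam * S - M := by linarith
    set t : ℝ := min ((lam * S - M) / (2 * (D + 1))) (δ / (2 * (|IH| + 1))) with htdef
    have ht0 : 0 < t := lt_min (by positivity) (by positivity)
    have htc : t * (D + 1) < lam * S - M := by
      calc t * (D + 1) ≤ ((lam * S - M) / (2 * (D + 1))) * (D + 1) :=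
            mul_le_mul_of_nonneg_right (min_le_left _ _) (by linarith)
        _ = (lam * S - M) / 2 := by field_simp
        _ < lam * S - M := by linarith
    have htδ : t * (|IH| + 1) < δ := by
      have h1 : (0:ℝ) < |IH| + 1 := by positivity
      calc t * (|IH| + 1) ≤ (δ / (2 * (|IH| + 1))) * (|IH| + 1) :=
            mul_le_mul_of_nonneg_right (min_le_right _ _) (by linarith)
        _ = δ / 2 := by field_simp
        _ < δ := by linarith
    set ε : ℝ := Real.sqrt t with hεdef
    have hε0 : 0 < ε := Real.sqrt_pos.mpr ht0
    have hε2 : ε ^ 2 = t := Real.sq_sqrt ht0.le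
    have hdiff : ∀ x ∈ Ω, DifferentiableAt ℝ u x := fun x hx =>
      (hu.differentiableOn one_ne_zero).differentiableAt
        (Filter.mem_of_superset (hΩo.mem_nhds hx) subset_closure)
    have hnorm2 : ∀ x : Pt, ‖(ε:ℂ) • u x‖ ^ 2 = t * ‖u x‖ ^ 2 := fun x => by
      rw [norm_smul, Complex.norm_real, Real.norm_of_nonneg hε0.le, mul_pow, hε2]
    have hnorm4 : ∀ x : Pt, ‖(ε:ℂ) • u x‖ ^ 4 = t ^ 2 * ‖u x‖ ^ 4 := fun x => by
      rw [norm_smul, Complex.norm_real, Real.norm_of_nonneg hε0.le, mul_pow,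
        show ε ^ 4 = (ε ^ 2) ^ 2 by ring, hε2]
    have hpd1 : ∀ x ∈ Ω, ‖pd1 (fun y => (ε:ℂ) • u y) x‖ ^ 2 = t * ‖pd1 u x‖ ^ 2 := by
      intro x hx
      have : pd1 (fun y => (ε:ℂ) • u y) x = (ε:ℂ) • pd1 u x := by
        unfold pd1; rw [fderiv_fun_const_smul (hdiff x hx)]; rfl
      rw [this, norm_smul, Complex.norm_real, Real.norm_of_nonneg hε0.le, mul_pow, hε2]
    have hpd2 : ∀ x ∈ Ω, ‖pd2 (fun y => (ε:ℂ) • u y) x‖ ^ 2 = t * ‖pd2 u x‖ ^ 2 := by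
      intro x hx
      have : pd2 (fun y => (ε:ℂ) • u y) x = (ε:ℂ) • pd2 u x := by
        unfold pd2; rw [fderiv_fun_const_smul (hdiff x hx)]; rfl
      rw [this, norm_smul, Complex.norm_real, Real.norm_of_nonneg hε0.le, mul_pow, hε2]
    have hmg : ∀ x ∈ Ω, mgradSq Ae (fun y => (ε:ℂ) • u y) x = t * mgradSq Ae u x := by
      intro x hx
      rw [scaled_mgrad (hdiff x hx) hε0.le, hε2]
    have hεC : ((ε:ℝ) : ℂ) ≠ 0 := Complex.ofReal_ne_zero.mpr hε0.ne'
    refine ⟨fun y => (ε:ℂ) • u y, hu.const_smul _, ?_, ?_, ?_⟩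
    · intro hzero
      rcases smul_eq_zero.mp (hzero x₁ hx₁c) with h | h
      · exact hεC h
      · exact hx₁ne h
    · rw [setIntegral_congr_fun hΩo.measurableSet
        (g := fun x => t * (‖u x‖ ^ 2 + ‖pd1 u x‖ ^ 2 + ‖pd2 u x‖ ^ 2))
        (fun x hx => by rw [hnorm2 x, hpd1 x hx, hpd2 x hx]; ring),
        integral_const_mul]
      have h1 : t * IH ≤ t * |IH| := mul_le_mul_of_nonneg_left (le_abs_self _) ht0.le
      have h2 : t * |IH| < t * (|IH| + 1) := by nlinarith
      rw [← hIHdef]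
      linarith
    · unfold GLfun
      have hz2 : (∫ x : Pt, (rot2 Ae x - He x) ^ 2) = 0 := by
        have : (fun x : Pt => (rot2 Ae x - He x) ^ 2) = fun _ => (0:ℝ) :=
          funext fun x => by rw [hAerot]; ring
        rw [this, integral_zero]
      rw [hz2, mul_zero, add_zero]
      rw [setIntegral_congr_fun hΩo.measurableSet
        (g := fun x => (-(lam * t)) * ‖u x‖ ^ 2 +
          ((lam * t ^ 2 / 2) * ‖u x‖ ^ 4 + t * mgradSq Ae u x))
        (fun x hx => by rw [hnorm2 x, hnorm4 x, hmg x hx]; ring)]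
      have hI2 : IntegrableOn
          (fun x => (lam * t ^ 2 / 2) * ‖u x‖ ^ 4 + t * mgradSq Ae u x) Ω volume :=
        (hQint.const_mul _).add (hMint.const_mul _)
      rw [integral_add (hSint.const_mul _) hI2,
        integral_add (hQint.const_mul _) (hMint.const_mul _),
        integral_const_mul, integral_const_mul, integral_const_mul]
      rw [← hSdef, ← hQdef, ← hMdef]
      have key : t * (t * (D + 1)) < t * (lam * S - M) := mul_lt_mul_of_pos_left htc ht0
      have ht2 : 0 < t * t := mul_pos ht0 ht0
      rw [hDdef] at key
      nlinarith [key, ht2]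
end
end

section
/- For κ > 0 let S_κ := { λ > 0 : G_{λ,κ}(u,A) ≥ 0 for every admissible pair (u,A) }, i.e. the set of λ for which the normal state is a global minimizer. Then: (i) S_κ is downward closed, i.e. if λ ∈ S_κ and 0 < λ' ≤ λ then λ' ∈ S_κ; and (ii) if S_κ is nonempty and bounded above, then sup S_κ ∈ S_κ. Consequently S_κ, when nonempty and bounded, is an interval of the form (0, λ₀^{opt}(κ)]. -/
open MeasureTheory Complex Set

noncomputable section

lemma fderiv_real_smul {f : Pt → ℂ} {t : ℝ} (ht : t ≠ 0) (x : Pt) :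
    fderiv ℝ (fun y => t • f y) x = t • fderiv ℝ f x := by
  by_cases h : DifferentiableAt ℝ f x
  · exact fderiv_const_smul h t
  · rw [fderiv_zero_of_not_differentiableAt h]
    refine (fderiv_zero_of_not_differentiableAt ?_).trans (show (0 : Pt →L[ℝ] ℂ) = t • 0 from ContinuousLinearMap.ext fun v => by
      rw [ContinuousLinearMap.smul_apply, ContinuousLinearMap.zero_apply, smul_zero])
    intro h'
    apply h
    have h2 := h'.const_smul t⁻¹
    simpa only [Pi.smul_def, smul_smul, inv_mul_cancel₀ ht, one_smul] using h2

lemma mgradSq_smul (A : Pt → Pt) (u : Pt → ℂ) {t : ℝ} (ht : 0 < t) (x : Pt) :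
    mgradSq A (fun y => t • u y) x = t ^ 2 * mgradSq A u x := by
  have h1 : pd1 (fun y => t • u y) x = t • pd1 u x := by
    rw [pd1, pd1, fderiv_real_smul ht.ne' x]; rfl
  have h2 : pd2 (fun y => t • u y) x = t • pd2 u x := by
    rw [pd2, pd2, fderiv_real_smul ht.ne' x]; rfl
  have key : ∀ (c : ℂ) (z w : ℂ), ‖t • z - Complex.I * c * (t • w)‖ ^ 2
      = t ^ 2 * ‖z - Complex.I * c * w‖ ^ 2 := by
    intro c z w
    rw [mul_smul_comm, ← smul_sub, norm_smul, Real.norm_eq_abs, abs_of_pos ht, mul_pow]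
  simp only [mgradSq, h1, h2, key]
  ring

lemma key_lemma (Ω : Set Pt) (hΩo : IsOpen Ω) (hΩb : Bornology.IsBounded Ω)
    (He : Pt → ℝ) (Ae : Pt → Pt) (k : ℝ) {μ ν : ℝ} (hμ : 0 < μ) (hν : 0 < ν)
    (hmem : ∀ (u : Pt → ℂ) (A : Pt → Pt), Admissible Ω Ae u A → 0 ≤ GLfun Ω He μ k u A)
    (u : Pt → ℂ) (A : Pt → Pt) (hadm : Admissible Ω Ae u A) :
    min ((μ - ν) * ∫ x in Ω, ‖u x‖ ^ 2) 0 ≤ GLfun Ω He ν k u A := by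
  set t : ℝ := Real.sqrt (ν / μ) with htdef
  have ht : 0 < t := Real.sqrt_pos.mpr (by positivity)
  have ht2 : t ^ 2 = ν / μ := Real.sq_sqrt (by positivity)
  have hmt : μ * t ^ 2 = ν := by rw [ht2]; field_simp
  have hadm' : Admissible Ω Ae (fun y => t • u y) A := ⟨hadm.1.const_smul t, hadm.2⟩
  have hge := hmem (fun y => t • u y) A hadm'
  have hF : 0 ≤ ∫ x, (rot2 A x - He x) ^ 2 := integral_nonneg fun x => sq_nonneg _
  have hH : 0 ≤ ∫ x in Ω, ‖u x‖ ^ 2 :=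
    setIntegral_nonneg hΩo.measurableSet fun x _ => sq_nonneg _
  have hpt : ∀ x : Pt, μ * (-‖(fun y => t • u y) x‖ ^ 2 + (1 / 2) * ‖(fun y => t • u y) x‖ ^ 4)
        + mgradSq A (fun y => t • u y) x
      = t ^ 2 * (ν * (-‖u x‖ ^ 2 + (1 / 2) * ‖u x‖ ^ 4) + mgradSq A u x)
        - (ν * (1 - t ^ 2)) * ‖u x‖ ^ 2 := by
    intro x
    have hn : ‖(fun y => t • u y) x‖ = t * ‖u x‖ := by
      simp [norm_smul, Real.norm_eq_abs, abs_of_pos ht]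
    rw [mgradSq_smul A u ht x, hn]
    linear_combination (-‖u x‖ ^ 2 + (1 / 2) * t ^ 2 * ‖u x‖ ^ 4) * hmt
  have hInt_h : IntegrableOn (fun x => ‖u x‖ ^ 2) Ω volume := by
    have hcl : IsCompact (closure Ω) :=
      Metric.isCompact_of_isClosed_isBounded isClosed_closure hΩb.closure
    have hcont : ContinuousOn (fun x => ‖u x‖ ^ 2) (closure Ω) :=
      (hadm.1.continuousOn.norm).pow 2
    obtain ⟨C, hC⟩ := hcl.exists_bound_of_continuousOn hcont
    refine Integrable.mono' (g := fun _ => C)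
      (integrableOn_const (C := C) hΩb.measure_lt_top.ne) ?_ ?_
    · exact ((hcont.mono subset_closure).aestronglyMeasurable hΩo.measurableSet)
    · exact (ae_restrict_iff' hΩo.measurableSet).mpr
        (Filter.Eventually.of_forall fun x hx => hC x (subset_closure hx))
  rw [GLfun] at hge ⊢
  by_cases hif : IntegrableOn
      (fun x => ν * (-‖u x‖ ^ 2 + (1 / 2) * ‖u x‖ ^ 4) + mgradSq A u x) Ω volume
  · have hsplit : (∫ x in Ω, (μ * (-‖(fun y => t • u y) x‖ ^ 2
          + (1 / 2) * ‖(fun y => t • u y) x‖ ^ 4) + mgradSq A (fun y => t • u y) x))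
        = t ^ 2 * (∫ x in Ω, (ν * (-‖u x‖ ^ 2 + (1 / 2) * ‖u x‖ ^ 4) + mgradSq A u x))
          - (ν * (1 - t ^ 2)) * ∫ x in Ω, ‖u x‖ ^ 2 := by
      simp only [hpt]
      rw [integral_sub (hif.const_mul _) (hInt_h.const_mul _),
        integral_const_mul, integral_const_mul]
    rw [hsplit] at hge
    refine le_trans (min_le_left _ _) ?_
    have hx : 0 ≤ t ^ 2 * ((∫ x in Ω, (ν * (-‖u x‖ ^ 2 + (1 / 2) * ‖u x‖ ^ 4) + mgradSq A u x))
        + (k ^ 2 / ν) * (∫ x, (rot2 A x - He x) ^ 2)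
        - (μ - ν) * ∫ x in Ω, ‖u x‖ ^ 2) := by
      have heq : t ^ 2 * ((∫ x in Ω, (ν * (-‖u x‖ ^ 2 + (1 / 2) * ‖u x‖ ^ 4) + mgradSq A u x))
            + (k ^ 2 / ν) * (∫ x, (rot2 A x - He x) ^ 2)
            - (μ - ν) * ∫ x in Ω, ‖u x‖ ^ 2)
          = t ^ 2 * (∫ x in Ω, (ν * (-‖u x‖ ^ 2 + (1 / 2) * ‖u x‖ ^ 4) + mgradSq A u x))
            - (ν * (1 - t ^ 2)) * (∫ x in Ω, ‖u x‖ ^ 2)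
            + (k ^ 2 / μ) * (∫ x, (rot2 A x - He x) ^ 2) := by
        rw [ht2]; field_simp; ring
      rw [heq]; exact hge
    have := (mul_nonneg_iff_of_pos_left (pow_pos ht 2)).mp hx
    linarith
  · have hgni : ¬ IntegrableOn (fun x => μ * (-‖(fun y => t • u y) x‖ ^ 2
        + (1 / 2) * ‖(fun y => t • u y) x‖ ^ 4) + mgradSq A (fun y => t • u y) x) Ω volume := by
      intro hg
      apply hif
      have heq : (fun x => ν * (-‖u x‖ ^ 2 + (1 / 2) * ‖u x‖ ^ 4) + mgradSq A u x)
          = fun x => (1 / t ^ 2) * ((μ * (-‖(fun y => t • u y) x‖ ^ 2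
              + (1 / 2) * ‖(fun y => t • u y) x‖ ^ 4) + mgradSq A (fun y => t • u y) x)
            + (ν * (1 - t ^ 2)) * ‖u x‖ ^ 2) := by
        funext x
        rw [hpt x]
        field_simp
        ring
      rw [heq]
      exact (hg.add (hInt_h.const_mul _)).const_mul _
    have h0 : (∫ x in Ω, (ν * (-‖u x‖ ^ 2 + (1 / 2) * ‖u x‖ ^ 4) + mgradSq A u x)) = 0 :=
      integral_undef hif
    rw [integral_undef hgni] at hge
    refine le_trans (min_le_right _ _) ?_
    rw [h0, zero_add]
    exact mul_nonneg (by positivity) hF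

/-- For `S_κ = {λ > 0 : the normal state is a global minimizer of G_{λ,κ}}`:
(i) `S_κ` is downward closed in `(0,∞)`; (ii) if nonempty and bounded above, it
contains its supremum; consequently it is then the interval `(0, sup S_κ]`. -/
theorem statement10
    (Ω : Set Pt) (hΩo : IsOpen Ω) (hΩc : IsConnected Ω) (hΩb : Bornology.IsBounded Ω)
    (hΩs : SmoothBoundary Ω)
    (He : Pt → ℝ) (hHe : ContDiff ℝ (⊤ : ℕ∞) He) (hHes : HasCompactSupport He)
    (Ae : Pt → Pt) (hAe : ContDiff ℝ (⊤ : ℕ∞) Ae)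
    (hAerot : ∀ x, rot2 Ae x = He x) (hAediv : ∀ x, div2 Ae x = 0)
    (k : ℝ) (hk : 0 < k) (S : Set ℝ)
    (hS : S = {lam : ℝ | 0 < lam ∧ ∀ (u : Pt → ℂ) (A : Pt → Pt),
      Admissible Ω Ae u A → 0 ≤ GLfun Ω He lam k u A}) :
    (∀ lam ∈ S, ∀ lam' : ℝ, 0 < lam' → lam' ≤ lam → lam' ∈ S) ∧
      (S.Nonempty → BddAbove S → sSup S ∈ S) ∧
      (S.Nonempty → BddAbove S → S = Set.Ioc 0 (sSup S)) := by
  have hmemS : ∀ lam ∈ S, 0 < lam ∧ ∀ (u : Pt → ℂ) (A : Pt → Pt),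
      Admissible Ω Ae u A → 0 ≤ GLfun Ω He lam k u A := by
    intro lam hlam; rwa [hS] at hlam
  have part1 : ∀ lam ∈ S, ∀ lam' : ℝ, 0 < lam' → lam' ≤ lam → lam' ∈ S := by
    intro lam hlam lam' h0 hle
    rw [hS]
    refine ⟨h0, fun u A hadm => ?_⟩
    have h := key_lemma Ω hΩo hΩb He Ae k (hmemS lam hlam).1 h0 (hmemS lam hlam).2 u A hadm
    have hH : 0 ≤ ∫ x in Ω, ‖u x‖ ^ 2 :=
      setIntegral_nonneg hΩo.measurableSet fun x _ => sq_nonneg _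
    refine le_trans (le_min ?_ le_rfl) h
    nlinarith
  have part2 : S.Nonempty → BddAbove S → sSup S ∈ S := by
    intro hne hbdd
    obtain ⟨lam₁, hlam₁S⟩ := hne
    have h₁ := hmemS lam₁ hlam₁S
    have hsup_pos : 0 < sSup S := lt_of_lt_of_le h₁.1 (le_csSup hbdd hlam₁S)
    set s0 := sSup S with hs0
    rw [hS]
    refine ⟨hsup_pos, fun u A hadm => ?_⟩
    have hH : 0 ≤ ∫ x in Ω, ‖u x‖ ^ 2 :=
      setIntegral_nonneg hΩo.measurableSet fun x _ => sq_nonneg _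
    by_contra hG
    push_neg at hG
    have hkey' : ∀ lam ∈ S, (lam - s0) * (∫ x in Ω, ‖u x‖ ^ 2)
        ≤ GLfun Ω He s0 k u A := by
      intro lam hlamS
      have h := key_lemma Ω hΩo hΩb He Ae k (hmemS lam hlamS).1 hsup_pos
        (hmemS lam hlamS).2 u A hadm
      have hle : lam ≤ s0 := le_csSup hbdd hlamS
      have h0 : (lam - s0) * (∫ x in Ω, ‖u x‖ ^ 2) ≤ 0 := by nlinarith
      rwa [min_eq_left h0] at h
    have hHpos : 0 < ∫ x in Ω, ‖u x‖ ^ 2 := by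
      rcases hH.lt_or_eq with h | h
      · exact h
      · exfalso
        have h2 := hkey' lam₁ hlam₁S
        rw [← h, mul_zero] at h2
        linarith
    have hub : s0 ≤ s0 + (GLfun Ω He s0 k u A) / (∫ x in Ω, ‖u x‖ ^ 2) := by
      apply csSup_le ⟨lam₁, hlam₁S⟩
      intro lam hlamS
      have h2 := hkey' lam hlamS
      have h3 : lam - s0 ≤ (GLfun Ω He s0 k u A) / (∫ x in Ω, ‖u x‖ ^ 2) :=
        (le_div_iff₀ hHpos).mpr h2
      linarith
    have hneg : (GLfun Ω He s0 k u A) / (∫ x in Ω, ‖u x‖ ^ 2) < 0 :=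
      div_neg_of_neg_of_pos hG hHpos
    linarith
  refine ⟨part1, part2, ?_⟩
  intro hne hbdd
  ext lam
  simp only [Set.mem_Ioc]
  constructor
  · intro hlam
    exact ⟨(hmemS lam hlam).1, le_csSup hbdd hlam⟩
  · rintro ⟨h0, hle⟩
    exact part1 (sSup S) (part2 hne hbdd) lam h0 hle
end
end

section
/- Let λ, κ > 0, let μ ≥ 0, and let (u,A) be an admissible pair such that G_{λ,κ}(u,A) ≤ 0 and ∫_Ω |∇u − iAu|² dx ≥ μ ∫_Ω |u|² dx. Then ∫_Ω |u|² dx ≤ (2|Ω|/λ)·max(λ − μ, 0), where |Ω| is the Lebesgue measure of Ω. In particular, if μ ≥ λ then u ≡ 0 on Ω. -/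
open MeasureTheory Complex Set
open Topology Filter

noncomputable section
set_option maxHeartbeats 1000000

/-- If `(u,A)` is admissible with `G_{λ,κ}(u,A) ≤ 0` and the magnetic kinetic energy
dominates `μ ∫_Ω |u|²`, then `∫_Ω |u|² ≤ (2|Ω|/λ)·max(λ-μ,0)`; in particular `u ≡ 0`
on `Ω` when `μ ≥ λ`. -/
theorem statement13
    (Ω : Set Pt) (hΩo : IsOpen Ω) (hΩc : IsConnected Ω) (hΩb : Bornology.IsBounded Ω)
    (hΩs : SmoothBoundary Ω)
    (He : Pt → ℝ) (hHe : ContDiff ℝ (⊤ : ℕ∞) He) (hHes : HasCompactSupport He)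
    (Ae : Pt → Pt) (hAe : ContDiff ℝ (⊤ : ℕ∞) Ae)
    (hAerot : ∀ x, rot2 Ae x = He x) (hAediv : ∀ x, div2 Ae x = 0)
    (lam k mu : ℝ) (hlam : 0 < lam) (hk : 0 < k) (hmu : 0 ≤ mu)
    (u : Pt → ℂ) (A : Pt → Pt) (hadm : Admissible Ω Ae u A)
    (hG : GLfun Ω He lam k u A ≤ 0)
    (hlow : mu * ∫ x in Ω, ‖u x‖ ^ 2 ≤ ∫ x in Ω, mgradSq A u x) :
    (∫ x in Ω, ‖u x‖ ^ 2) ≤ (2 * (volume Ω).toReal / lam) * max (lam - mu) 0 ∧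
      (lam ≤ mu → ∀ x ∈ Ω, u x = 0) := by
  classical
  obtain ⟨hu1, a, ha1, hAeq, -⟩ := hadm
  have hKc : IsCompact (closure Ω) :=
    Metric.isCompact_of_isClosed_isBounded isClosed_closure hΩb.closure
  have hucont : ContinuousOn u (closure Ω) := hu1.continuousOn
  have hAcont : Continuous A := by
    have hA : A = fun x => Ae x + a x := funext hAeq
    rw [hA]; exact (hAe.continuous).add ha1.continuous
  have hΩm : MeasurableSet Ω := hΩo.measurableSet
  have hvol : volume Ω < ⊤ := hΩb.measure_lt_top
  have hΩne : Ω.Nonempty := hΩc.nonempty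
  -- bounds for u and A on the closure
  obtain ⟨Mu, hMu⟩ := hKc.exists_bound_of_continuousOn hucont
  obtain ⟨MA, hMA⟩ := hKc.exists_bound_of_continuousOn hAcont.continuousOn
  have hMu0 : 0 ≤ Mu := le_trans (norm_nonneg _) (hMu _ (subset_closure hΩne.choose_spec))
  have hMA0 : 0 ≤ MA := le_trans (norm_nonneg _) (hMA _ (subset_closure hΩne.choose_spec))
  -- local bound on the derivative of u
  have hloc : ∀ x ∈ closure Ω, ∃ W, IsOpen W ∧ x ∈ W ∧
      ∃ M, ∀ y ∈ W ∩ Ω, ‖fderiv ℝ u y‖ ≤ M := by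
    intro x hx
    obtain ⟨t, ht, p, hp⟩ := hu1 x hx 1 le_rfl
    rw [insert_eq_of_mem hx] at ht
    have hxt : x ∈ t := mem_of_mem_nhdsWithin hx ht
    obtain ⟨V, hVo, hxV, hVt⟩ := mem_nhdsWithin.1 ht
    have hcont : ContinuousOn (fun y => ‖p y 1‖) t := (hp.cont 1 le_rfl).norm
    have hnb : {y | ‖p y 1‖ < ‖p x 1‖ + 1} ∈ 𝓝[t] x :=
      hcont x hxt (Iio_mem_nhds (lt_add_one _))
    obtain ⟨V', hV'o, hxV', hV't⟩ := mem_nhdsWithin.1 hnb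
    refine ⟨V ∩ V', hVo.inter hV'o, ⟨hxV, hxV'⟩, ‖p x 1‖ + 1, ?_⟩
    rintro y ⟨⟨hyV, hyV'⟩, hyΩ⟩
    have hyt : y ∈ t := hVt ⟨hyV, subset_closure hyΩ⟩
    have htnb : t ∈ 𝓝 y :=
      mem_nhds_iff.2 ⟨V ∩ Ω, fun z hz => hVt ⟨hz.1, subset_closure hz.2⟩,
        hVo.inter hΩo, hyV, hyΩ⟩
    have hder : HasFDerivAt u (continuousMultilinearCurryFin1 ℝ Pt ℂ (p y 1)) y :=
      (hp.hasFDerivWithinAt (by simp) hyt).hasFDerivAt htnb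
    rw [hder.fderiv]
    calc ‖(continuousMultilinearCurryFin1 ℝ Pt ℂ) (p y 1)‖ = ‖p y 1‖ :=
          LinearIsometryEquiv.norm_map _ _
      _ ≤ ‖p x 1‖ + 1 := le_of_lt (hV't ⟨hyV', hyt⟩)
  -- global bound on the derivative of u on Ω
  obtain ⟨Mf, hMf⟩ : ∃ M, ∀ y ∈ Ω, ‖fderiv ℝ u y‖ ≤ M := by
    choose W hWo hxW M hM using hloc
    obtain ⟨t, ht⟩ := hKc.elim_nhds_subcover' (fun x hx => W x hx)
      (fun x hx => (hWo x hx).mem_nhds (hxW x hx))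
    obtain ⟨M0, hM0⟩ := (t.image fun x : closure Ω => M x.1 x.2).exists_le
    refine ⟨M0, fun y hy => ?_⟩
    have := ht (subset_closure hy)
    simp only [mem_iUnion] at this
    obtain ⟨x, hxt, hyW⟩ := this
    exact le_trans (hM x.1 x.2 y ⟨hyW, hy⟩)
      (hM0 _ (Finset.mem_image_of_mem _ hxt))
  have hMf0 : 0 ≤ Mf := le_trans (norm_nonneg _) (hMf _ hΩne.choose_spec)
  -- pointwise bound on mgradSq on Ω
  set B : ℝ := Mf + MA * Mu with hB
  have hbound : ∀ y ∈ Ω, mgradSq A u y ≤ 2 * B ^ 2 := by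
    intro y hy
    have hyc : y ∈ closure Ω := subset_closure hy
    have hn1 : ‖((1:ℝ), (0:ℝ))‖ = 1 := by simp [Prod.norm_def]
    have hn2 : ‖((0:ℝ), (1:ℝ))‖ = 1 := by simp [Prod.norm_def]
    have hAu : ∀ c : ℝ, |c| ≤ ‖A y‖ → ‖Complex.I * (c : ℂ) * u y‖ ≤ MA * Mu := by
      intro c hc
      rw [norm_mul, norm_mul, Complex.norm_I, one_mul, Complex.norm_real,
        Real.norm_eq_abs]
      exact mul_le_mul (le_trans hc (hMA y hyc)) (hMu y hyc) (norm_nonneg _) hMA0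
    have h1 : ‖pd1 u y - Complex.I * ((A y).1 : ℂ) * u y‖ ≤ B := by
      refine le_trans (norm_sub_le _ _) ?_
      have := (fderiv ℝ u y).le_opNorm ((1:ℝ), (0:ℝ))
      rw [hn1, mul_one] at this
      exact add_le_add (le_trans this (hMf y hy))
        (hAu _ (by simpa [Real.norm_eq_abs] using norm_fst_le (A y)))
    have h2 : ‖pd2 u y - Complex.I * ((A y).2 : ℂ) * u y‖ ≤ B := by
      refine le_trans (norm_sub_le _ _) ?_
      have := (fderiv ℝ u y).le_opNorm ((0:ℝ), (1:ℝ))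
      rw [hn2, mul_one] at this
      exact add_le_add (le_trans this (hMf y hy))
        (hAu _ (by simpa [Real.norm_eq_abs] using norm_snd_le (A y)))
    have hB0 : 0 ≤ B := le_trans (norm_nonneg _) h1
    unfold mgradSq
    nlinarith [norm_nonneg (pd1 u y - Complex.I * ((A y).1 : ℂ) * u y),
      norm_nonneg (pd2 u y - Complex.I * ((A y).2 : ℂ) * u y)]
  have hmg0 : ∀ y, 0 ≤ mgradSq A u y := fun y =>
    add_nonneg (sq_nonneg _) (sq_nonneg _)
  -- integrability of mgradSq on Ω
  have hg_meas : AEStronglyMeasurable (mgradSq A u) (volume.restrict Ω) := by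
    have hu_m : AEMeasurable u (volume.restrict Ω) :=
      ((hucont.mono subset_closure).aemeasurable hΩm)
    have hd1 : AEMeasurable (pd1 u) (volume.restrict Ω) :=
      (measurable_fderiv_apply_const ℝ u ((1:ℝ), (0:ℝ))).aemeasurable
    have hd2 : AEMeasurable (pd2 u) (volume.restrict Ω) :=
      (measurable_fderiv_apply_const ℝ u ((0:ℝ), (1:ℝ))).aemeasurable
    have hA1 : AEMeasurable (fun x => (((A x).1 : ℝ) : ℂ)) (volume.restrict Ω) :=
      (Complex.continuous_ofReal.comp (continuous_fst.comp hAcont)).aemeasurable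
    have hA2 : AEMeasurable (fun x => (((A x).2 : ℝ) : ℂ)) (volume.restrict Ω) :=
      (Complex.continuous_ofReal.comp (continuous_snd.comp hAcont)).aemeasurable
    have h1 : AEMeasurable (fun x => ‖pd1 u x - Complex.I * ((A x).1 : ℂ) * u x‖ ^ 2)
        (volume.restrict Ω) :=
      ((hd1.sub ((aemeasurable_const.mul hA1).mul hu_m)).norm.pow aemeasurable_const)
    have h2 : AEMeasurable (fun x => ‖pd2 u x - Complex.I * ((A x).2 : ℂ) * u x‖ ^ 2)
        (volume.restrict Ω) :=
      ((hd2.sub ((aemeasurable_const.mul hA2).mul hu_m)).norm.pow aemeasurable_const)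
    exact (h1.add h2).aestronglyMeasurable
  haveI : IsFiniteMeasure (volume.restrict Ω) :=
    ⟨by rwa [MeasureTheory.Measure.restrict_apply_univ]⟩
  have hg_int : IntegrableOn (mgradSq A u) Ω volume := by
    refine ⟨hg_meas, HasFiniteIntegral.of_bounded (C := 2 * B ^ 2) ?_⟩
    refine ae_restrict_of_forall_mem hΩm fun y hy => ?_
    rw [Real.norm_eq_abs, _root_.abs_of_nonneg (hmg0 y)]
    exact hbound y hy
  -- integrability of powers of ‖u‖
  have h2c : ContinuousOn (fun x => ‖u x‖ ^ 2) (closure Ω) := (hucont.norm).pow 2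
  have h4c : ContinuousOn (fun x => ‖u x‖ ^ 4) (closure Ω) := (hucont.norm).pow 4
  have h2 : IntegrableOn (fun x => ‖u x‖ ^ 2) Ω volume :=
    (h2c.integrableOn_compact hKc).mono_set subset_closure
  have h4 : IntegrableOn (fun x => ‖u x‖ ^ 4) Ω volume :=
    (h4c.integrableOn_compact hKc).mono_set subset_closure
  set S : ℝ := ∫ x in Ω, ‖u x‖ ^ 2 with hSdef
  set Q : ℝ := ∫ x in Ω, ‖u x‖ ^ 4 with hQdef
  set V : ℝ := (volume Ω).toReal with hVdef
  have hVpos : 0 < V := ENNReal.toReal_pos (hΩo.measure_pos volume hΩne).ne' hvol.ne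
  have hS0 : 0 ≤ S := setIntegral_nonneg hΩm fun x _ => by positivity
  -- the GL energy inequality
  have hfun_eq : (fun x => lam * (-‖u x‖ ^ 2 + (1 / 2) * ‖u x‖ ^ 4))
      = fun x => (lam * (1 / 2)) * ‖u x‖ ^ 4 - lam * ‖u x‖ ^ 2 := by
    funext x; ring
  have hf_int : IntegrableOn (fun x => lam * (-‖u x‖ ^ 2 + (1 / 2) * ‖u x‖ ^ 4)) Ω volume := by
    rw [hfun_eq]; exact (h4.const_mul _).sub (h2.const_mul _)
  have hT2 : 0 ≤ ∫ x, (rot2 A x - He x) ^ 2 := integral_nonneg fun x => sq_nonneg _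
  have hT1 : (∫ x in Ω, (lam * (-‖u x‖ ^ 2 + (1 / 2) * ‖u x‖ ^ 4) + mgradSq A u x)) ≤ 0 := by
    unfold GLfun at hG
    have hkl : 0 ≤ k ^ 2 / lam := div_nonneg (sq_nonneg k) hlam.le
    nlinarith [mul_nonneg hkl hT2]
  have hsplit : (∫ x in Ω, (lam * (-‖u x‖ ^ 2 + (1 / 2) * ‖u x‖ ^ 4) + mgradSq A u x))
      = (∫ x in Ω, lam * (-‖u x‖ ^ 2 + (1 / 2) * ‖u x‖ ^ 4)) + ∫ x in Ω, mgradSq A u x :=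
    integral_add hf_int hg_int
  have hfval : (∫ x in Ω, lam * (-‖u x‖ ^ 2 + (1 / 2) * ‖u x‖ ^ 4))
      = (lam * (1 / 2)) * Q - lam * S := by
    rw [hfun_eq, integral_sub (h4.const_mul _) (h2.const_mul _),
      integral_const_mul, integral_const_mul]
  have hQS : (lam / 2) * Q ≤ (lam - mu) * S := by
    rw [hsplit, hfval] at hT1
    nlinarith [hlow]
  -- Cauchy-Schwarz via the pointwise inequality
  have hCS : 0 ≤ Q - 2 * (S / V) * S + (S / V) ^ 2 * V := by
    have h0 : 0 ≤ ∫ x in Ω, (‖u x‖ ^ 2 - S / V) ^ 2 :=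
      setIntegral_nonneg hΩm fun x _ => sq_nonneg _
    have heq : (∫ x in Ω, (‖u x‖ ^ 2 - S / V) ^ 2)
        = Q - 2 * (S / V) * S + (S / V) ^ 2 * V := by
      have hfe : (fun x => (‖u x‖ ^ 2 - S / V) ^ 2)
          = fun x => (‖u x‖ ^ 4 - (2 * (S / V)) * ‖u x‖ ^ 2) + (S / V) ^ 2 := by
        funext x; ring
      have hsub : Integrable (fun x => ‖u x‖ ^ 4 - (2 * (S / V)) * ‖u x‖ ^ 2)
          (volume.restrict Ω) := h4.sub (h2.const_mul _)
      have hcst : Integrable (fun _ : Pt => (S / V) ^ 2) (volume.restrict Ω) :=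
        integrable_const _
      rw [hfe, integral_add hsub hcst,
        integral_sub h4 (h2.const_mul _), integral_const_mul, setIntegral_const,
        smul_eq_mul, measureReal_def]
      ring
    rw [heq] at h0; exact h0
  have hQlow : S ^ 2 / V ≤ Q := by
    have : 2 * (S / V) * S - (S / V) ^ 2 * V = S ^ 2 / V := by
      field_simp
      try ring
    linarith [hCS, this]
  set M : ℝ := max (lam - mu) 0 with hMdef
  have hM0 : 0 ≤ M := le_max_right _ _
  have hkey : lam * S ^ 2 ≤ 2 * V * (M * S) := by
    have h1 : (lam / 2) * (S ^ 2 / V) ≤ (lam - mu) * S :=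
      le_trans (mul_le_mul_of_nonneg_left hQlow (by linarith)) hQS
    have h2 : (lam - mu) * S ≤ M * S :=
      mul_le_mul_of_nonneg_right (le_max_left _ _) hS0
    have h3 : (lam / 2) * (S ^ 2 / V) ≤ M * S := le_trans h1 h2
    have h4 : (lam / 2) * (S ^ 2 / V) * (2 * V) ≤ M * S * (2 * V) :=
      mul_le_mul_of_nonneg_right h3 (by linarith)
    have h5 : (lam / 2) * (S ^ 2 / V) * (2 * V) = lam * S ^ 2 := by
      field_simp
      try ring
    linarith [h4, h5.symm.le, h5.le]
  have hmain : S ≤ 2 * V / lam * M := by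
    rcases hS0.eq_or_lt with hS | hS
    · rw [← hS]
      exact mul_nonneg (by positivity) hM0
    · have h6 : lam * S ≤ 2 * V * M := by
        have h7 : (lam * S) * S ≤ (2 * V * M) * S := by nlinarith [hkey]
        exact le_of_mul_le_mul_right h7 hS
      rw [div_mul_eq_mul_div, le_div_iff₀ hlam]
      linarith [h6]
  constructor
  · exact hmain
  · intro hlm x hx
    by_contra hne
    have hmax : M = 0 := max_eq_right (by linarith)
    have hSz : S = 0 := le_antisymm (by rw [hmax] at hmain; linarith) hS0
    have hpos : 0 < ‖u x‖ ^ 2 := pow_pos (norm_pos_iff.2 hne) 2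
    have hcx : ContinuousAt (fun y => ‖u y‖ ^ 2) x :=
      h2c.continuousAt (mem_of_superset (hΩo.mem_nhds hx) subset_closure)
    have hset : {y | ‖u x‖ ^ 2 / 2 < ‖u y‖ ^ 2} ∈ 𝓝 x :=
      hcx (Ioi_mem_nhds (by linarith))
    obtain ⟨r, hr, hball⟩ := Metric.mem_nhds_iff.1
      (Filter.inter_mem (hΩo.mem_nhds hx) hset)
    have hbsub : Metric.ball x r ⊆ Ω := fun z hz => (hball hz).1
    have hbint : IntegrableOn (fun y => ‖u y‖ ^ 2) (Metric.ball x r) volume :=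
      h2.mono_set hbsub
    have hlow2 : (‖u x‖ ^ 2 / 2) * (volume (Metric.ball x r)).toReal
        ≤ ∫ y in Metric.ball x r, ‖u y‖ ^ 2 :=
      by have := setIntegral_ge_of_const_le_real measurableSet_ball measure_ball_lt_top.ne
           (fun y hy => le_of_lt (hball hy).2) hbint
         exact this
    have hmono : (∫ y in Metric.ball x r, ‖u y‖ ^ 2) ≤ S :=
      setIntegral_mono_set h2
        (Filter.Eventually.of_forall fun y => by positivity)
        (Filter.Eventually.of_forall hbsub)
    have hbpos : 0 < (volume (Metric.ball x r)).toReal :=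
      ENNReal.toReal_pos (Metric.measure_ball_pos volume x hr).ne' measure_ball_lt_top.ne
    nlinarith [hlow2, hmono, hSz, hbpos, hpos]
end
end

section
/- Let Ω ⊂ ℝ² be open, let A : Ω → ℝ² be continuous, and let σ : Ω → ℂ be C¹ with |σ(x)| = 1 for all x ∈ Ω and ∂_j σ = 2iσA_j on Ω for j = 1,2. If u : Ω → ℂ is C¹ and satisfies σ·conj(u) = u on Ω (i.e. Ku = u for K := σ∘Γ, Γ the complex conjugation), then the supercurrent vanishes identically: Im(conj(u)·(∂_j u − iA_j u)) = 0 on Ω for j = 1,2. -/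
open MeasureTheory Complex Set

noncomputable section

open ComplexConjugate

/-!
Differentiating `u = σ ū` along a direction and using `∂σ = 2iσA` gives
`∂u = σ conj(∂u) + 2iA u`. Multiplying by `ū` and using `σ ū = u` once more shows that
`w := ū(∂u - iAu)` satisfies `w = conj w`, i.e. the supercurrent `Im w` vanishes.
-/

theorem fderiv_apply_eq_of_eventually_mul_conj_eq {E : Type*} [NormedAddCommGroup E]
    [NormedSpace ℝ E] {σ u : E → ℂ} {x : E}
    (hσ : DifferentiableAt ℝ σ x) (hu : DifferentiableAt ℝ u x)
    (hKu : ∀ᶠ y in nhds x, σ y * conj (u y) = u y) (v : E) :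
    fderiv ℝ u x v = σ x * conj (fderiv ℝ u x v) + conj (u x) * fderiv ℝ σ x v := by
  have hconj : HasFDerivAt (fun y => conj (u y)) (conjCLE.toContinuousLinearMap.comp
      (fderiv ℝ u x)) x :=
    conjCLE.toContinuousLinearMap.hasFDerivAt.comp x hu.hasFDerivAt
  have hprod := (hσ.hasFDerivAt.mul hconj).congr_of_eventuallyEq (hKu.mono fun _ h => h.symm)
  simpa using DFunLike.congr_fun (hu.hasFDerivAt.unique hprod) v

theorem im_conj_mul_sub_I_mul_eq_zero {a s z : ℂ} {t : ℝ} (ha : s * conj a = a)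
    (hz : z = s * conj z + conj a * (2 * I * s * t)) :
    (conj a * (z - I * t * a)).im = 0 := by
  rw [← conj_eq_iff_im]
  simp only [map_mul, map_sub, conj_conj, conj_ofReal, conj_I]
  linear_combination (-conj a) * hz - (conj z + 2 * I * t * conj a) * ha

theorem statement17_general (Ω : Set Pt) (hΩo : IsOpen Ω)
    (A : Pt → Pt)
    (σ : Pt → ℂ) (hσ : ContDiffOn ℝ 1 σ Ω)
    (hσd1 : ∀ x ∈ Ω, pd1 σ x = 2 * Complex.I * σ x * ((A x).1 : ℂ))
    (hσd2 : ∀ x ∈ Ω, pd2 σ x = 2 * Complex.I * σ x * ((A x).2 : ℂ))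
    (u : Pt → ℂ) (hu : ContDiffOn ℝ 1 u Ω)
    (hKu : ∀ x ∈ Ω, σ x * (starRingEnd ℂ) (u x) = u x) :
    ∀ x ∈ Ω,
      ((starRingEnd ℂ) (u x) * (pd1 u x - Complex.I * ((A x).1 : ℂ) * u x)).im = 0 ∧
      ((starRingEnd ℂ) (u x) * (pd2 u x - Complex.I * ((A x).2 : ℂ) * u x)).im = 0 := by
  intro x hx
  have hΩx : Ω ∈ nhds x := hΩo.mem_nhds hx
  have hderiv := fderiv_apply_eq_of_eventually_mul_conj_eq
    ((hσ.contDiffAt hΩx).differentiableAt one_ne_zero)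
    ((hu.contDiffAt hΩx).differentiableAt one_ne_zero) (Filter.mem_of_superset hΩx hKu)
  have h1 : pd1 u x = σ x * conj (pd1 u x) + conj (u x) * pd1 σ x := hderiv (1, 0)
  have h2 : pd2 u x = σ x * conj (pd2 u x) + conj (u x) * pd2 σ x := hderiv (0, 1)
  rw [hσd1 x hx] at h1
  rw [hσd2 x hx] at h2
  exact ⟨im_conj_mul_sub_I_mul_eq_zero (hKu x hx) h1, im_conj_mul_sub_I_mul_eq_zero (hKu x hx) h2⟩

/-- If `σ` is a `C¹` unimodular function on `Ω` with `∂_j σ = 2iσA_j`, and `u` is `C¹`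
with `σ·conj(u) = u` (i.e. `Ku = u`), then the supercurrent
`Im(conj(u)·(∂_j u - iA_j u))` vanishes identically on `Ω` for `j = 1, 2`. -/
theorem statement17 (Ω : Set Pt) (hΩo : IsOpen Ω)
    (A : Pt → Pt) (hA : ContinuousOn A Ω)
    (σ : Pt → ℂ) (hσ : ContDiffOn ℝ 1 σ Ω)
    (hσ1 : ∀ x ∈ Ω, ‖σ x‖ = 1)
    (hσd1 : ∀ x ∈ Ω, pd1 σ x = 2 * Complex.I * σ x * ((A x).1 : ℂ))
    (hσd2 : ∀ x ∈ Ω, pd2 σ x = 2 * Complex.I * σ x * ((A x).2 : ℂ))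
    (u : Pt → ℂ) (hu : ContDiffOn ℝ 1 u Ω)
    (hKu : ∀ x ∈ Ω, σ x * (starRingEnd ℂ) (u x) = u x) :
    ∀ x ∈ Ω,
      ((starRingEnd ℂ) (u x) * (pd1 u x - Complex.I * ((A x).1 : ℂ) * u x)).im = 0 ∧
      ((starRingEnd ℂ) (u x) * (pd2 u x - Complex.I * ((A x).2 : ℂ) * u x)).im = 0 :=
  statement17_general Ω hΩo A σ hσ hσd1 hσd2 u hu hKu
end
end
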